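/- arXiv:1009.2734 — 2 statements merged into one kernel-verified Lean document; each statement's English description precedes it below -/
import Mathlib

section
/- Let S be a semigroup, {X_g}_{g∈S} an injective family of words over {b₁,b₂}, and let ξ be the smallest congruence on the free semigroup F(b₁,b₂) containing {(X_h, X_{h'}X_{h''}) : h = h'h'' in S}. Then the map γ : S → F(b₁,b₂)/ξ defined by γ(g) = X_g ξ is an injective semigroup homomorphism. -/
/-- A set of words satisfies the overlap property if (1) no element is a proper subword of
another and (2) whenever `Y ≡ UV` and `Z ≡ WU` with `U` nonempty, `Y ≡ U ≡ Z`. -/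
def OverlapProp {α : Type*} (M : Set (List α)) : Prop :=
  (∀ Y ∈ M, ∀ Z ∈ M, Y <:+: Z → Y = Z) ∧
  (∀ Y ∈ M, ∀ Z ∈ M, ∀ U V W : List α, U ≠ [] → Y = U ++ V → Z = W ++ U →
    U = Y ∧ U = Z)

/-- The word (nonempty list of letters) corresponding to an element of a free semigroup. -/
def FSword {α : Type*} (x : FreeSemigroup α) : List α := x.head :: x.tail

/-- The defining relations `X_h = X_{h'} X_{h''}` for `h = h'h''` in `S`, as a relation on
the free semigroup `F(b₁,b₂)`. -/
def defRel {S : Type*} [Semigroup S] (X : S → FreeSemigroup (Fin 2)) :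
    FreeSemigroup (Fin 2) → FreeSemigroup (Fin 2) → Prop := fun x y =>
  ∃ h h' h'' : S, h = h' * h'' ∧ x = X h ∧ y = X h' * X h''

/-!
By the overlap property, every occurrence of a block `X_h` inside a concatenation of blocks is
one of the blocks. Hence replacing `X_h` by `X_{h'} X_{h''}` (for `h = h'h''`), or conversely, in
any context changes neither the set of words that factor into blocks with product `g` nor these
products. So `ξ` lies in the syntactic congruence of each of these languages, and since `X_g`
factors only as itself, `X_g ξ = X_{g'} ξ` forces `g = g'`.
-/

open Function

section Words

variable {α : Type*}

lemma FSword_mul (x y : FreeSemigroup α) : FSword (x * y) = FSword x ++ FSword y := rfl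

lemma FSword_ne_nil (x : FreeSemigroup α) : FSword x ≠ [] := List.cons_ne_nil _ _

lemma FSword_injective : Injective (FSword (α := α)) := by
  rintro ⟨x, xs⟩ ⟨y, ys⟩ h
  simpa [FSword, FreeSemigroup.ext_iff] using h

def syntacticCon (P : List α → Prop) : Con (FreeSemigroup α) where
  r x y := ∀ a b, P (a ++ FSword x ++ b) ↔ P (a ++ FSword y ++ b)
  iseqv := ⟨fun _ _ _ => Iff.rfl, fun h a b => (h a b).symm,
    fun h₁ h₂ a b => (h₁ a b).trans (h₂ a b)⟩
  mul' {x₁ x₂ y₁ y₂} hx hy a b := by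
    simp only [FSword_mul]
    calc P (a ++ (FSword x₁ ++ FSword y₁) ++ b)
        ↔ P (a ++ FSword x₁ ++ (FSword y₁ ++ b)) := by simp only [List.append_assoc]
      _ ↔ P (a ++ FSword x₂ ++ (FSword y₁ ++ b)) := hx _ _
      _ ↔ P (a ++ FSword x₂ ++ FSword y₁ ++ b) := by simp only [List.append_assoc]
      _ ↔ P (a ++ FSword x₂ ++ FSword y₂ ++ b) := hy _ _
      _ ↔ P (a ++ (FSword x₂ ++ FSword y₂) ++ b) := by simp only [List.append_assoc]

lemma flatten_map_eq_nil_iff {ι : Type*} {w : ι → List α} (hw0 : ∀ i, w i ≠ []) {l : List ι} :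
    (l.map w).flatten = [] ↔ l = [] := by
  cases l <;> simp [hw0]

end Words

namespace OverlapProp

variable {α ι : Type*} {M : Set (List α)}

lemma aligned_of_overlap (hM : OverlapProp M) {Y Z a b c t : List α} (hY : Y ∈ M) (hZ : Z ∈ M)
    (hc : c ≠ []) (hZ_eq : Z = a ++ c) (hYb : Y ++ b = c ++ t) : a = [] ∧ Y = Z ∧ b = t := by
  rcases List.append_eq_append_iff.1 hYb with ⟨d, rfl, rfl⟩ | ⟨d, rfl, rfl⟩
  · have hYZ : Y = Z := hM.1 Y hY Z hZ ⟨a, d, by simp [hZ_eq]⟩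
    have hlen := congrArg List.length (hYZ.trans hZ_eq)
    simp only [List.length_append] at hlen
    obtain rfl : a = [] := List.eq_nil_of_length_eq_zero (by omega)
    obtain rfl : d = [] := List.eq_nil_of_length_eq_zero (by omega)
    simpa using hYZ
  · obtain ⟨hcY, hcZ⟩ := hM.2 _ hY Z hZ c d a hc rfl hZ_eq
    have hd := congrArg List.length hcY
    have ha := congrArg List.length (hcZ.trans hZ_eq)
    simp only [List.length_append] at hd ha
    obtain rfl : a = [] := List.eq_nil_of_length_eq_zero (by omega)
    obtain rfl : d = [] := List.eq_nil_of_length_eq_zero (by omega)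
    simpa using hcZ

lemma split_of_append_eq_flatten (hM : OverlapProp M) {w : ι → List α} (hw : ∀ i, w i ∈ M)
    {Y : List α} (hY : Y ∈ M) (hY0 : Y ≠ []) :
    ∀ {l : List ι} {a b : List α}, a ++ Y ++ b = (l.map w).flatten →
      ∃ l₁ i r, l = l₁ ++ i :: r ∧ a = (l₁.map w).flatten ∧ Y = w i ∧ b = (r.map w).flatten
  | [], a, b, h => by simp_all
  | i₀ :: l, a, b, h => by
    rw [List.map_cons, List.flatten_cons, List.append_assoc] at h
    obtain ⟨a', rfl, hl⟩ | ⟨c, hw₀, hc, hc0⟩ :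
        (∃ a', a = w i₀ ++ a' ∧ a' ++ Y ++ b = (l.map w).flatten) ∨
          ∃ c, w i₀ = a ++ c ∧ Y ++ b = c ++ (l.map w).flatten ∧ c ≠ [] := by
      rcases List.append_eq_append_iff.1 h with ⟨c, hw₀, hc⟩ | ⟨a', rfl, hl⟩
      · by_cases hc0 : c = []
        · subst hc0
          exact Or.inl ⟨[], by simpa using hw₀.symm, by simpa using hc⟩
        · exact Or.inr ⟨c, hw₀, hc, hc0⟩
      · exact Or.inl ⟨a', rfl, by simpa using hl.symm⟩
    · obtain ⟨l₁, i, r, rfl, rfl, hYi, rfl⟩ := split_of_append_eq_flatten hM hw hY hY0 hl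
      exact ⟨i₀ :: l₁, i, r, rfl, by simp, hYi, rfl⟩
    · obtain ⟨rfl, hYi, rfl⟩ := aligned_of_overlap hM hY (hw i₀) hc0 hw₀ hc
      exact ⟨[], i₀, l, rfl, rfl, hYi, rfl⟩

lemma append_append_eq_flatten_iff (hM : OverlapProp M) {w : ι → List α} (hw : ∀ i, w i ∈ M)
    (hw0 : ∀ i, w i ≠ []) (hinj : Injective w) {l : List ι} {a b : List α} {i : ι} :
    a ++ w i ++ b = (l.map w).flatten ↔
      ∃ l₁ r, l = l₁ ++ i :: r ∧ (l₁.map w).flatten = a ∧ (r.map w).flatten = b := by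
  constructor
  · intro h
    obtain ⟨l₁, j, r, rfl, rfl, hij, rfl⟩ := split_of_append_eq_flatten hM hw (hw i) (hw0 i) h
    exact ⟨l₁, r, by rw [hinj hij], rfl, rfl⟩
  · rintro ⟨l₁, r, rfl, rfl, rfl⟩
    simp

end OverlapProp

section Factorizations

variable {α S : Type*} [Semigroup S] {M : Set (List α)}

/-- The product is taken in `WithOne S`, so the empty factorization (product `1`) factors no
`g : S`. -/
def Factors (w : S → List α) (u : List α) (g : S) : Prop :=
  ∃ l : List S, (l.map w).flatten = u ∧ (l.map ((↑) : S → WithOne S)).prod = g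

lemma factors_append_append_iff (hM : OverlapProp M) {w : S → List α} (hw : ∀ g, w g ∈ M)
    (hw0 : ∀ g, w g ≠ []) (hinj : Injective w) {a b : List α} {h g : S} :
    Factors w (a ++ w h ++ b) g ↔ ∃ l₁ r : List S, (l₁.map w).flatten = a ∧
      (r.map w).flatten = b ∧ ((l₁ ++ h :: r).map ((↑) : S → WithOne S)).prod = g := by
  constructor
  · rintro ⟨l, hl, hg⟩
    obtain ⟨l₁, r, rfl, ha, hb⟩ := (hM.append_append_eq_flatten_iff hw hw0 hinj).1 hl.symm
    exact ⟨l₁, r, ha, hb, hg⟩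
  · rintro ⟨l₁, r, rfl, rfl, hg⟩
    exact ⟨_, by simp, hg⟩

lemma factors_append_append_append_iff (hM : OverlapProp M) {w : S → List α}
    (hw : ∀ g, w g ∈ M) (hw0 : ∀ g, w g ≠ []) (hinj : Injective w) {a b : List α} {h h' g : S} :
    Factors w (a ++ w h ++ w h' ++ b) g ↔ ∃ l₁ r : List S, (l₁.map w).flatten = a ∧
      (r.map w).flatten = b ∧ ((l₁ ++ h :: h' :: r).map ((↑) : S → WithOne S)).prod = g := by
  rw [List.append_assoc _ (w h'), factors_append_append_iff hM hw hw0 hinj]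
  constructor
  · rintro ⟨l₁, r, ha, hr, hg⟩
    obtain ⟨r₁, r₂, rfl, hr₁, hb⟩ :=
      (hM.append_append_eq_flatten_iff hw hw0 hinj (a := [])).1 (by simpa using hr.symm)
    obtain rfl : r₁ = [] := (flatten_map_eq_nil_iff hw0).1 hr₁
    exact ⟨l₁, r₂, ha, hb, hg⟩
  · rintro ⟨l₁, r, ha, hb, hg⟩
    exact ⟨l₁, h' :: r, ha, by simp [hb], hg⟩

lemma factors_mul_iff (hM : OverlapProp M) {w : S → List α} (hw : ∀ g, w g ∈ M)
    (hw0 : ∀ g, w g ≠ []) (hinj : Injective w) {a b : List α} {h h' g : S} :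
    Factors w (a ++ w (h * h') ++ b) g ↔ Factors w (a ++ w h ++ w h' ++ b) g := by
  rw [factors_append_append_iff hM hw hw0 hinj, factors_append_append_append_iff hM hw hw0 hinj]
  simp only [List.map_append, List.map_cons, List.prod_append, List.prod_cons, WithOne.coe_mul,
    mul_assoc]

lemma factors_self_iff (hM : OverlapProp M) {w : S → List α} (hw : ∀ g, w g ∈ M)
    (hw0 : ∀ g, w g ≠ []) (hinj : Injective w) {h g : S} : Factors w (w h) g ↔ h = g := by
  simpa [flatten_map_eq_nil_iff hw0] using
    factors_append_append_iff hM hw hw0 hinj (a := []) (b := []) (h := h) (g := g)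

end Factorizations

theorem stmt11_general {S : Type*} [Semigroup S] (M : Set (List (Fin 2))) (hM : OverlapProp M)
    (X : S → FreeSemigroup (Fin 2)) (hinj : Function.Injective X)
    (hmem : ∀ g : S, FSword (X g) ∈ M) :
    ∃ γ : S →ₙ* (conGen (defRel X)).Quotient,
      Function.Injective γ ∧
      ∀ g : S, γ g = ((X g : FreeSemigroup (Fin 2)) : (conGen (defRel X)).Quotient) := by
  set w : S → List (Fin 2) := fun g => FSword (X g)
  have hw0 (g : S) : w g ≠ [] := FSword_ne_nil (X g)
  have hwinj : Injective w := FSword_injective.comp hinj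
  have hle (g : S) : conGen (defRel X) ≤ syntacticCon (Factors w · g) := by
    refine Con.conGen_le.2 ?_
    rintro _ _ ⟨_, h, h', rfl, rfl, rfl⟩ a b
    rw [FSword_mul, ← List.append_assoc]
    exact factors_mul_iff hM hmem hw0 hwinj
  refine ⟨⟨fun g => (X g : (conGen (defRel X)).Quotient), fun g h => ?_⟩, fun g g' hg => ?_,
    fun _ => rfl⟩
  · exact (Con.eq _).2 (ConGen.Rel.of _ _ ⟨g * h, g, h, rfl, rfl, rfl⟩)
  · have hparse : Factors w (w g) g' ↔ Factors w (w g') g' := by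
      simpa using hle g' ((Con.eq _).1 hg) [] []
    rw [factors_self_iff hM hmem hw0 hwinj, factors_self_iff hM hmem hw0 hwinj] at hparse
    exact hparse.2 rfl

/-- with `ξ` the smallest congruence on `F(b₁,b₂)` containing the relations
`(X_h, X_{h'}X_{h''})` for `h = h'h''` in `S`, the map `γ : S → F(b₁,b₂)/ξ`, `g ↦ X_g ξ`,
is an injective semigroup homomorphism. -/
theorem stmt11 {S : Type*} [Semigroup S] (M : Set (List (Fin 2))) (hM : OverlapProp M)
    (hne : [] ∉ M) (X : S → FreeSemigroup (Fin 2)) (hinj : Function.Injective X)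
    (hmem : ∀ g : S, FSword (X g) ∈ M) :
    ∃ γ : S →ₙ* (conGen (defRel X)).Quotient,
      Function.Injective γ ∧
      ∀ g : S, γ g = ((X g : FreeSemigroup (Fin 2)) : (conGen (defRel X)).Quotient) :=
  stmt11_general M hM X hinj hmem
end

section
/- Let l : ℕ → ℕ satisfy (C1) l(i+j) ≤ l(i) + l(j) for all i, j ≥ 1, and (C2) there exists a > 0 with card{i ∈ ℕ : l(i) ≤ r} ≤ a^r for all r ∈ ℕ. Then there exists a 2-generated semigroup H and an element h ∈ H such that the function i ↦ |h^i|_H is equivalent to l, i.e., there are constants c₁, c₂ > 0 with c₁ l(i) ≤ |h^i|_H ≤ c₂ l(i) for all i ≥ 1. -/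
/-- The product of a (nonempty) list of elements of a semigroup; `none` for the empty list. -/
def listProd {M : Type*} [Semigroup M] : List M → Option M
  | [] => none
  | a :: t => some (t.foldl (· * ·) a)

/-- `RepLen B h n` : `h` is represented by some word of length `n` over the alphabet `B`. -/
def RepLen {M : Type*} [Semigroup M] (B : Set M) (h : M) (n : ℕ) : Prop :=
  ∃ w : List M, (∀ x ∈ w, x ∈ B) ∧ listProd w = some h ∧ w.length = n

/-- `lenOf B h` : the length of a shortest word over `B` representing `h`. -/
noncomputable def lenOf {M : Type*} [Semigroup M] (B : Set M) (h : M) : ℕ :=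
  sInf {n | RepLen B h n}

/-- `pow1 g n = g^(n+1)`: positive powers of an element of a semigroup. -/
def pow1 {M : Type*} [Semigroup M] (g : M) : ℕ → M
  | 0 => g
  | n + 1 => pow1 g n * g


/-!
Let `W` be a prefix code over `{0, 1}` indexed by the positive integers, and consider the automaton
that reads a binary word letter by letter, keeping the sum `n` of the indices of the code words
read so far and the part `p` of the current code word, and that dies as soon as `p` is no longer
a prefix of a code word. Its transition semigroup is generated by the two letters, and the word
`W j` acts as the translation `shift j` of the counter: from a state with `p ≠ []` it kills,
because every code word starts with `110` and contains `11` nowhere else. Hence `h = shift 1`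
has `h^n = shift n`, of length at most `|W n|`. Conversely, a word acting as `shift n` carries
`(0, [])` to `(n, [])`, so it is a concatenation `W j₁ ⋯ W j_k` with `∑ jᵢ = n`, and
subadditivity gives `l n ≤ ∑ l jᵢ ≤ ∑ |W jᵢ|`.

Condition (C2) provides a code with `|W j|` comparable to `l j`: if `a ≤ 2^K`, at most
`2^(K r)` indices have `l ≤ r`, so `j` is determined by `l j` in unary followed by the rank of `j`
among the indices with the same value of `l`, in `K l(j)` binary digits. Interleaving that word
with zeros and prefixing `11` makes the marker unique.
-/

section Words

variable {M N : Type*} [Semigroup M] [Semigroup N]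

theorem listProd_map_mulHom (φ : M →ₙ* N) (w : List M) :
    listProd (w.map φ) = (listProd w).map φ := by
  cases w with
  | nil => rfl
  | cons a t =>
    simp only [List.map_cons, listProd, Option.map_some, List.foldl_map]
    exact congrArg some (List.foldl_hom φ fun x y => (map_mul φ x y).symm)

theorem listProd_map_coe_eq_some {S : Subsemigroup M} {ι : Type*} (g : ι → S) (w : List ι)
    (z : S) :
    listProd (w.map fun i => (g i : M)) = some (z : M) ↔ listProd (w.map g) = some z := by
  have hmap : (w.map fun i => (g i : M)) = (w.map g).map (MulMemClass.subtype S) := by simp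
  rw [hmap, listProd_map_mulHom]
  exact (Option.map_injective (MulMemClass.subtype_injective S)).eq_iff (b := some z)

theorem coe_pow1 {S : Subsemigroup M} (z : S) (i : ℕ) : ((pow1 z i : S) : M) = pow1 (z : M) i := by
  induction i with
  | zero => rfl
  | succ i ih => simp only [pow1, MulMemClass.coe_mul, ih]

theorem repLen_range_iff {ι : Type*} (g : ι → M) (h : M) (n : ℕ) :
    RepLen (Set.range g) h n ↔ ∃ w : List ι, listProd (w.map g) = some h ∧ w.length = n := by
  constructor
  · rintro ⟨v, hv, hprod, rfl⟩
    obtain ⟨w, rfl⟩ : v ∈ Set.range (List.map g) := by rwa [Set.range_list_map]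
    exact ⟨w, hprod, (List.length_map _).symm⟩
  · rintro ⟨w, hprod, rfl⟩
    exact ⟨w.map g, by simp, hprod, List.length_map _⟩

theorem le_lenOf {B : Set M} {h : M} {m : ℕ} (hrep : ∃ n, RepLen B h n)
    (hle : ∀ n, RepLen B h n → m ≤ n) : m ≤ lenOf B h :=
  hle _ (Nat.sInf_mem hrep)

end Words

section MarkedWords

def escape (d : List Bool) : List Bool := d.flatMap fun b => [false, b]

def marked (d : List Bool) : List Bool := true :: true :: escape d

@[simp] theorem escape_nil : escape [] = [] := rfl

@[simp] theorem escape_cons (b : Bool) (d : List Bool) :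
    escape (b :: d) = false :: b :: escape d := rfl

@[simp] theorem length_escape (d : List Bool) : (escape d).length = 2 * d.length := by
  induction d with
  | nil => rfl
  | cons b d ih => simp [ih]; ring

theorem List.IsPrefix.of_escape {d e : List Bool} (h : escape d <+: escape e) : d <+: e := by
  induction d generalizing e with
  | nil => exact List.nil_prefix
  | cons b d ih =>
    cases e with
    | nil => simp at h
    | cons c e =>
      simp only [escape_cons, List.cons_prefix_cons, true_and] at h ⊢
      exact ⟨h.1, ih h.2⟩

theorem not_true_true_infix_cons_escape (b : Bool) (d : List Bool) :
    ¬ [true, true] <:+: b :: escape d := by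
  induction d generalizing b with
  | nil => exact fun h => by simpa using h.length_le
  | cons c d ih => simp [List.infix_cons_iff, ih]

theorem marked_prefix_marked {d e : List Bool} (h : marked d <+: marked e) : d <+: e := by
  simp only [marked, List.cons_prefix_cons, true_and] at h
  exact h.of_escape

theorem not_append_true_true_prefix_marked {q : List Bool} (hq : q ≠ []) (d : List Bool) :
    ¬ q ++ [true, true] <+: marked d := by
  obtain ⟨x, q, rfl⟩ := List.exists_cons_of_ne_nil hq
  rintro ⟨t, ht⟩
  simp only [marked, List.cons_append, List.cons.injEq] at ht
  exact not_true_true_infix_cons_escape true d ⟨q, t, by simpa using ht.2⟩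

end MarkedWords

structure IsMarkedCode (W : ℕ → List Bool) : Prop where
  prefix_free : ∀ m j, 1 ≤ m → 1 ≤ j → W m <+: W j → m = j
  exists_eq_cons : ∀ j, 1 ≤ j → ∃ t, W j = true :: true :: false :: t
  not_append_prefix : ∀ q m, q ≠ [] → 1 ≤ m → ¬ q ++ [true, true] <+: W m

theorem isMarkedCode_marked {c : ℕ → List Bool}
    (hc : ∀ m j, 1 ≤ m → 1 ≤ j → c m <+: c j → m = j) (hne : ∀ j, 1 ≤ j → c j ≠ []) :
    IsMarkedCode fun j => marked (c j) where
  prefix_free m j hm hj h := hc m j hm hj (marked_prefix_marked h)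
  exists_eq_cons j hj := by
    obtain ⟨b, d, hd⟩ := List.exists_cons_of_ne_nil (hne j hj)
    exact ⟨b :: escape d, by rw [hd]; rfl⟩
  not_append_prefix q m hq _ := not_append_true_true_prefix_marked hq (c m)

section LengthCode

def bits (L n : ℕ) : List Bool := List.ofFn fun t : Fin L => n.testBit t

theorem eq_of_bits_eq {L a b : ℕ} (ha : a < 2 ^ L) (hb : b < 2 ^ L) (h : bits L a = bits L b) :
    a = b := by
  refine Nat.eq_of_testBit_eq fun t => ?_
  by_cases ht : t < L
  · exact congrFun (List.ofFn_injective h) ⟨t, ht⟩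
  · have hL : 2 ^ L ≤ 2 ^ t := Nat.pow_le_pow_right two_pos (not_lt.mp ht)
    rw [Nat.testBit_lt_two_pow (ha.trans_le hL), Nat.testBit_lt_two_pow (hb.trans_le hL)]

theorem exists_le_two_pow_mul {f : ℕ → ℕ} {a : ℝ} (ha : 0 ≤ a) (hf : ∀ r, (f r : ℝ) ≤ a ^ r) :
    ∃ K, ∀ r, f r ≤ 2 ^ (K * r) := by
  obtain ⟨K, hK⟩ := pow_unbounded_of_one_lt a one_lt_two
  refine ⟨K, fun r => ?_⟩
  have : (f r : ℝ) ≤ (2 ^ (K * r) : ℕ) := by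
    calc (f r : ℝ) ≤ a ^ r := hf r
      _ ≤ ((2 : ℝ) ^ K) ^ r := by gcongr
      _ = (2 ^ (K * r) : ℕ) := by push_cast; ring
  exact_mod_cast this

variable (l : ℕ → ℕ) (K : ℕ)

open Classical in
noncomputable def rankInFiber (i : ℕ) : ℕ := Nat.count (fun x => 1 ≤ x ∧ l x = l i) i

noncomputable def lengthCode (i : ℕ) : List Bool :=
  List.replicate (l i) true ++ false :: bits (K * l i) (rankInFiber l i)

variable {l K}

theorem rankInFiber_lt (hfin : ∀ r, {i | 1 ≤ i ∧ l i ≤ r}.Finite)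
    (hcard : ∀ r, {i | 1 ≤ i ∧ l i ≤ r}.ncard ≤ 2 ^ (K * r)) {i : ℕ} (hi : 1 ≤ i) :
    rankInFiber l i < 2 ^ (K * l i) := by
  classical
  have hfib : {x | 1 ≤ x ∧ l x = l i}.Finite :=
    (hfin (l i)).subset fun x hx => ⟨hx.1, hx.2.le⟩
  calc rankInFiber l i < hfib.toFinset.card := Nat.count_lt_card hfib ⟨hi, rfl⟩
    _ = {x | 1 ≤ x ∧ l x = l i}.ncard := (Set.ncard_eq_toFinset_card _ hfib).symm
    _ ≤ {x | 1 ≤ x ∧ l x ≤ l i}.ncard :=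
      Set.ncard_le_ncard (fun x hx => ⟨hx.1, hx.2.le⟩) (hfin _)
    _ ≤ 2 ^ (K * l i) := hcard _

theorem eq_and_prefix_of_unary_prefix {a b : ℕ} {s t : List Bool}
    (h : List.replicate a true ++ false :: s <+: List.replicate b true ++ false :: t) :
    a = b ∧ s <+: t := by
  induction a generalizing b with
  | zero => cases b <;> simp_all [List.replicate_succ]
  | succ a ih =>
    cases b with
    | zero => simp [List.replicate_succ] at h
    | succ b =>
      obtain ⟨rfl, hst⟩ := ih (by simpa [List.replicate_succ] using h)
      exact ⟨rfl, hst⟩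

theorem lengthCode_prefix_free (hfin : ∀ r, {i | 1 ≤ i ∧ l i ≤ r}.Finite)
    (hcard : ∀ r, {i | 1 ≤ i ∧ l i ≤ r}.ncard ≤ 2 ^ (K * r)) {m j : ℕ} (hm : 1 ≤ m)
    (hj : 1 ≤ j) (h : lengthCode l K m <+: lengthCode l K j) : m = j := by
  classical
  obtain ⟨hl, hbits⟩ := eq_and_prefix_of_unary_prefix h
  rw [hl] at hbits
  have hrank : rankInFiber l m = rankInFiber l j :=
    eq_of_bits_eq (by rw [← hl]; exact rankInFiber_lt hfin hcard hm) (rankInFiber_lt hfin hcard hj)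
      (hbits.eq_of_length (by simp [bits]))
  unfold rankInFiber at hrank
  rw [← hl] at hrank
  exact Nat.count_injective ⟨hm, rfl⟩ ⟨hj, hl.symm⟩ hrank

theorem length_marked_lengthCode (i : ℕ) :
    (marked (lengthCode l K i)).length = 2 * (K + 1) * l i + 4 := by
  simp [marked, lengthCode, bits]; ring

theorem isMarkedCode_marked_lengthCode (hfin : ∀ r, {i | 1 ≤ i ∧ l i ≤ r}.Finite)
    (hcard : ∀ r, {i | 1 ≤ i ∧ l i ≤ r}.ncard ≤ 2 ^ (K * r)) :
    IsMarkedCode fun i => marked (lengthCode l K i) :=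
  isMarkedCode_marked (fun _ _ hm hj h => lengthCode_prefix_free hfin hcard hm hj h)
    fun _ _ => by simp [lengthCode]

end LengthCode

/-- Self-maps composed in diagrammatic order, so that a word acts letter by letter from the left. -/
def RightTransf (X : Type*) : Type _ := X → X

instance (X : Type*) : Semigroup (RightTransf X) where
  mul f g := g ∘ f
  mul_assoc _ _ _ := rfl

theorem RightTransf.mul_apply {X : Type*} (f g : RightTransf X) (x : X) : (f * g) x = g (f x) :=
  rfl

namespace CodeDecoder

/-- `some (n, p)`: the indices of the code words read so far sum to `n`, and `p` is the part of
the next code word read so far; `none` is the dead state. -/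
abbrev State : Type := Option (ℕ × List Bool)

variable (W : ℕ → List Bool)

open Classical in
noncomputable def step (x : Bool) : State → State
  | none => none
  | some (n, p) =>
    if h : ∃ j, 1 ≤ j ∧ W j = p ++ [x] then some (n + h.choose, [])
    else if ∃ j, 1 ≤ j ∧ p ++ [x] <+: W j then some (n, p ++ [x]) else none

noncomputable def run (w : List Bool) (s : State) : State :=
  w.foldl (fun s x => step W x s) s

theorem run_cons (x : Bool) (w : List Bool) (s : State) :
    run W (x :: w) s = run W w (step W x s) := rfl

@[simp] theorem run_none (w : List Bool) : run W w none = none := by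
  induction w with
  | nil => rfl
  | cons x w ih => exact ih

noncomputable def act (w : List Bool) : RightTransf State := run W w

noncomputable def letter (x : Bool) : RightTransf State := step W x

abbrev TransitionSemigroup : Type := Subsemigroup.closure (Set.range (letter W))

noncomputable def generator (x : Bool) : TransitionSemigroup W :=
  ⟨letter W x, Subsemigroup.subset_closure ⟨x, rfl⟩⟩

def shift (j : ℕ) : RightTransf State := fun
  | some (n, []) => some (n + j, [])
  | _ => none

variable {W}

theorem step_of_eq_code (hW : IsMarkedCode W) {j n : ℕ} {x : Bool} {p : List Bool} (hj : 1 ≤ j)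
    (h : W j = p ++ [x]) : step W x (some (n, p)) = some (n + j, []) := by
  have hex : ∃ j, 1 ≤ j ∧ W j = p ++ [x] := ⟨j, hj, h⟩
  have hchoose : hex.choose = j :=
    hW.prefix_free _ _ hex.choose_spec.1 hj ((hex.choose_spec.2.trans h.symm) ▸ List.prefix_refl _)
  simp only [step, dif_pos hex, hchoose]

theorem step_of_prefix {j n : ℕ} {x : Bool} {p : List Bool} (hj : 1 ≤ j) (hpre : p ++ [x] <+: W j)
    (hne : ∀ m, 1 ≤ m → W m ≠ p ++ [x]) : step W x (some (n, p)) = some (n, p ++ [x]) := by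
  have hnex : ¬ ∃ m, 1 ≤ m ∧ W m = p ++ [x] := fun ⟨m, hm, h⟩ => hne m hm h
  simp only [step, dif_neg hnex, if_pos (⟨j, hj, hpre⟩ : ∃ j, 1 ≤ j ∧ p ++ [x] <+: W j)]

theorem step_of_not_prefix {n : ℕ} {x : Bool} {p : List Bool}
    (h : ∀ m, 1 ≤ m → ¬ p ++ [x] <+: W m) : step W x (some (n, p)) = none := by
  have hnex : ¬ ∃ m, 1 ≤ m ∧ W m = p ++ [x] :=
    fun ⟨m, hm, hWm⟩ => h m hm (hWm ▸ List.prefix_refl _)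
  have hnpre : ¬ ∃ m, 1 ≤ m ∧ p ++ [x] <+: W m := fun ⟨m, hm, hpre⟩ => h m hm hpre
  simp only [step, dif_neg hnex, if_neg hnpre]

theorem step_eq_some {n : ℕ} {x : Bool} {p : List Bool} {s : ℕ × List Bool}
    (h : step W x (some (n, p)) = some s) :
    (∃ j, 1 ≤ j ∧ W j = p ++ [x] ∧ s = (n + j, [])) ∨ s = (n, p ++ [x]) := by
  simp only [step] at h
  split_ifs at h with hcode
  · exact Or.inl ⟨_, hcode.choose_spec.1, hcode.choose_spec.2, (Option.some.inj h).symm⟩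
  · exact Or.inr (Option.some.inj h).symm

theorem exists_flatten_of_run_eq_some {w : List Bool} {n n' : ℕ} {p p' : List Bool}
    (h : run W w (some (n, p)) = some (n', p')) :
    ∃ js : List ℕ, (∀ j ∈ js, 1 ≤ j) ∧ n' = n + js.sum ∧ p ++ w = (js.map W).flatten ++ p' := by
  induction w generalizing n p with
  | nil =>
    obtain ⟨rfl, rfl⟩ := Prod.mk.inj (Option.some.inj h)
    exact ⟨[], by simp, by simp, by simp⟩
  | cons x w ih =>
    rw [run_cons] at h
    rcases hs : step W x (some (n, p)) with _ | ⟨n₁, p₁⟩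
    · simp [hs] at h
    rw [hs] at h
    obtain ⟨js, hpos, hsum, hw⟩ := ih h
    rcases step_eq_some hs with ⟨j, hj, hWj, hs'⟩ | hs'
    · obtain ⟨rfl, rfl⟩ := Prod.mk.inj hs'
      refine ⟨j :: js, by simpa [hj] using hpos, by simp [hsum]; ring, ?_⟩
      rw [List.map_cons, List.flatten_cons, List.append_assoc, ← hw, hWj]
      simp
    · obtain ⟨rfl, rfl⟩ := Prod.mk.inj hs'
      exact ⟨js, hpos, hsum, by simpa using hw⟩

theorem run_of_append_eq_code (hW : IsMarkedCode W) {j n : ℕ} (hj : 1 ≤ j) {v u : List Bool}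
    (huv : u ++ v = W j) (hv : v ≠ []) : run W v (some (n, u)) = some (n + j, []) := by
  induction v generalizing u with
  | nil => exact absurd rfl hv
  | cons x v ih =>
    rcases eq_or_ne v [] with rfl | hv'
    · exact step_of_eq_code hW hj huv.symm
    have hpre : u ++ [x] <+: W j := ⟨v, by simp [← huv]⟩
    have hne : ∀ m, 1 ≤ m → W m ≠ u ++ [x] := by
      rintro m hm hWm
      obtain rfl : m = j := hW.prefix_free m j hm hj (hWm ▸ hpre)
      have := congrArg List.length (huv.trans hWm)
      simp [hv'] at this
    rw [run_cons, step_of_prefix hj hpre hne]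
    exact ih (by simpa using huv) hv'

theorem run_code_of_ne_nil (hW : IsMarkedCode W) {j n : ℕ} (hj : 1 ≤ j) {q : List Bool}
    (hq : q ≠ []) : run W (W j) (some (n, q)) = none := by
  obtain ⟨t, ht⟩ := hW.exists_eq_cons j hj
  rw [ht, run_cons]
  rcases hs : step W true (some (n, q)) with _ | ⟨n₁, p₁⟩
  · exact run_none W _
  rcases step_eq_some hs with ⟨m, -, -, hs'⟩ | hs'
  · obtain ⟨rfl, rfl⟩ := Prod.mk.inj hs'
    have hT : step W true (some (n + m, [])) = some (n + m, [true]) := by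
      refine step_of_prefix hj (by simp [ht]) fun k hk hWk => ?_
      obtain ⟨t', ht'⟩ := hW.exists_eq_cons k hk
      simp [ht'] at hWk
    have hTF : step W false (some (n + m, [true])) = none := by
      refine step_of_not_prefix fun k hk hpre => ?_
      obtain ⟨t', ht'⟩ := hW.exists_eq_cons k hk
      simp [ht'] at hpre
    rw [run_cons, hT, run_cons, hTF, run_none]
  · obtain ⟨-, rfl⟩ := Prod.mk.inj hs'
    rw [run_cons, step_of_not_prefix fun k hk => by simpa using hW.not_append_prefix q k hq hk,
      run_none]

theorem act_code (hW : IsMarkedCode W) {j : ℕ} (hj : 1 ≤ j) : act W (W j) = shift j := by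
  funext s
  rcases s with _ | ⟨n, _ | ⟨b, q⟩⟩
  · exact run_none W _
  · obtain ⟨t, ht⟩ := hW.exists_eq_cons j hj
    exact run_of_append_eq_code hW hj (List.nil_append _) (by simp [ht])
  · exact run_code_of_ne_nil hW hj (List.cons_ne_nil b q)

theorem shift_mul_shift (i j : ℕ) : shift i * shift j = shift (i + j) := by
  funext s
  rcases s with _ | ⟨n, _ | ⟨b, q⟩⟩ <;> simp [RightTransf.mul_apply, shift, add_assoc]

theorem pow1_shift_one (i : ℕ) : pow1 (shift 1) i = shift (i + 1) := by
  induction i with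
  | zero => rfl
  | succ i ih => rw [pow1, ih, shift_mul_shift]

theorem le_length_of_act_eq_shift {l : ℕ → ℕ}
    (hl : ∀ i j, 1 ≤ i → 1 ≤ j → l (i + j) ≤ l i + l j)
    (hlW : ∀ j, 1 ≤ j → l j ≤ (W j).length) {w : List Bool} {n : ℕ} (hn : 1 ≤ n)
    (h : act W w = shift n) : l n ≤ w.length := by
  have hrun : run W w (some (0, [])) = some (n, []) := by
    simpa [act, shift] using congrFun h (some (0, []))
  obtain ⟨js, hpos, hsum, hw⟩ := exists_flatten_of_run_eq_some hrun
  rw [zero_add] at hsum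
  simp only [List.nil_append, List.append_nil] at hw
  have hne : js ≠ [] := by
    rintro rfl
    simp at hsum
    omega
  calc l n = l js.sum := by rw [hsum]
    _ ≤ (js.map l).sum :=
      List.le_sum_nonempty_of_subadditive_on_pred l (1 ≤ ·) hl
        (fun _ _ ha _ => le_add_right ha) js hne hpos
    _ ≤ (js.map fun j => (W j).length).sum := List.sum_le_sum fun j hj => hlW j (hpos j hj)
    _ = w.length := by rw [hw, List.length_flatten, List.map_map]; rfl

theorem foldl_mul_map_letter (w : List Bool) (f : RightTransf State) :
    (w.map (letter W)).foldl (· * ·) f = f * act W w := by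
  induction w generalizing f with
  | nil => rfl
  | cons x w ih => rw [List.map_cons, List.foldl_cons, ih]; rfl

theorem listProd_map_letter_eq_some_iff {w : List Bool} {f : RightTransf State} :
    listProd (w.map (letter W)) = some f ↔ w ≠ [] ∧ act W w = f := by
  cases w with
  | nil => simp [listProd]
  | cons x w =>
    simp only [List.map_cons, listProd, foldl_mul_map_letter, Option.some.injEq, ne_eq,
      reduceCtorEq, not_false_eq_true, true_and]
    rfl

theorem range_generator : Set.range (generator W) = {generator W true, generator W false} := by
  rw [Bool.range_eq, Set.pair_comm]

theorem closure_generators :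
    Subsemigroup.closure {generator W true, generator W false} = ⊤ := by
  rw [← range_generator, ← Subsemigroup.closure_closure_coe_preimage]
  congr 1
  ext z
  simp [generator, Subtype.ext_iff]

theorem repLen_generators_iff {z : TransitionSemigroup W} {k : ℕ} :
    RepLen {generator W true, generator W false} z k ↔
      ∃ w : List Bool, w ≠ [] ∧ act W w = z ∧ w.length = k := by
  simp only [← range_generator, repLen_range_iff, ← listProd_map_coe_eq_some]
  exact exists_congr fun w => by rw [← and_assoc, ← listProd_map_letter_eq_some_iff]; rfl

theorem exists_coe_eq_act {w : List Bool} (hw : w ≠ []) :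
    ∃ z : TransitionSemigroup W, (z : RightTransf State) = act W w := by
  obtain ⟨x, t, rfl⟩ := List.exists_cons_of_ne_nil hw
  refine ⟨(t.map (generator W)).foldl (· * ·) (generator W x), ?_⟩
  have h := (listProd_map_coe_eq_some (generator W) (x :: t) _).mpr rfl
  exact (listProd_map_letter_eq_some_iff.mp h).2.symm

theorem repLen_code (hW : IsMarkedCode W) {j : ℕ} (hj : 1 ≤ j) {z : TransitionSemigroup W}
    (hz : (z : RightTransf State) = shift j) :
    RepLen {generator W true, generator W false} z (W j).length := by
  obtain ⟨t, ht⟩ := hW.exists_eq_cons j hj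
  exact repLen_generators_iff.mpr ⟨W j, by simp [ht], by rw [act_code hW hj, hz], rfl⟩

theorem lenOf_le_length_code (hW : IsMarkedCode W) {j : ℕ} (hj : 1 ≤ j)
    {z : TransitionSemigroup W} (hz : (z : RightTransf State) = shift j) :
    lenOf {generator W true, generator W false} z ≤ (W j).length :=
  Nat.sInf_le (repLen_code hW hj hz)

theorem le_lenOf_of_coe_eq_shift (hW : IsMarkedCode W) {l : ℕ → ℕ}
    (hl : ∀ i j, 1 ≤ i → 1 ≤ j → l (i + j) ≤ l i + l j)
    (hlW : ∀ j, 1 ≤ j → l j ≤ (W j).length) {j : ℕ} (hj : 1 ≤ j) {z : TransitionSemigroup W}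
    (hz : (z : RightTransf State) = shift j) :
    l j ≤ lenOf {generator W true, generator W false} z :=
  le_lenOf ⟨_, repLen_code hW hj hz⟩ fun k hk => by
    obtain ⟨w, -, hw, rfl⟩ := repLen_generators_iff.mp hk
    exact le_length_of_act_eq_shift hl hlW hj (hw.trans hz)

end CodeDecoder

open CodeDecoder

/-- for any `l : ℕ → ℕ` satisfying (C1) and (C2), there is a `2`-generated
semigroup `H` and `h ∈ H` with `|h^i|_H ≈ l(i)` (here `pow1 h (i-1) = h^i`). -/
theorem stmt16 (l : ℕ → ℕ) (hpos : ∀ i, 1 ≤ i → 1 ≤ l i)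
    (hC1 : ∀ i j : ℕ, 1 ≤ i → 1 ≤ j → l (i + j) ≤ l i + l j)
    (hC2 : ∃ a : ℝ, 0 < a ∧ ∀ r : ℕ, {i : ℕ | 1 ≤ i ∧ l i ≤ r}.Finite ∧
      (({i : ℕ | 1 ≤ i ∧ l i ≤ r}).ncard : ℝ) ≤ a ^ r) :
    ∃ (H : Type) (iH : Semigroup H) (b₁ b₂ : H) (h : H),
      @Subsemigroup.closure H (@Semigroup.toMul H iH) {b₁, b₂} = ⊤ ∧
      ∃ c₁ c₂ : ℝ, 0 < c₁ ∧ 0 < c₂ ∧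
        ∀ i : ℕ, c₁ * l (i + 1) ≤ (@lenOf H iH {b₁, b₂} (@pow1 H iH h i) : ℝ) ∧
          (@lenOf H iH {b₁, b₂} (@pow1 H iH h i) : ℝ) ≤ c₂ * l (i + 1) := by
  obtain ⟨a, ha, hC2⟩ := hC2
  obtain ⟨K, hK⟩ := exists_le_two_pow_mul ha.le fun r => (hC2 r).2
  set W := fun i => marked (lengthCode l K i)
  have hW : IsMarkedCode W := isMarkedCode_marked_lengthCode (fun r => (hC2 r).1) hK
  have hlW : ∀ j, l j ≤ (W j).length := fun j => by
    simp only [W, length_marked_lengthCode]; nlinarith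
  obtain ⟨h, hh⟩ := exists_coe_eq_act (W := W) (w := W 1) (by simp [W, marked])
  rw [act_code hW le_rfl] at hh
  refine ⟨TransitionSemigroup W, inferInstance, generator W true, generator W false, h,
    closure_generators, 1, ((2 * (K + 1) + 4 : ℕ) : ℝ), one_pos, by positivity, fun i => ?_⟩
  have hpow : ((pow1 h i : TransitionSemigroup W) : RightTransf State) = shift (i + 1) := by
    rw [coe_pow1, hh, pow1_shift_one]
  constructor
  · rw [one_mul]
    exact_mod_cast le_lenOf_of_coe_eq_shift hW hC1 (fun j _ => hlW j) (by omega) hpow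
  · have hup := lenOf_le_length_code hW (by omega) hpow
    rw [length_marked_lengthCode] at hup
    have hl := hpos (i + 1) (by omega)
    exact_mod_cast hup.trans (by nlinarith)
end
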